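/- Γ₈ is isomorphic to the graph obtained from the complete bipartite graph K₃,₃ by subdividing once each of two non-adjacent (vertex-disjoint) edges; in particular, contracting the edges a₁v₁ and a₂v₂ of Γ₈ yields a graph isomorphic to K₃,₃, so K₃,₃ is a minor of Γ₈. -/

import Mathlib

/-- `H` is a minor of `G`: `H` can be obtained from a subgraph of `G` by contracting edges.
Equivalently (branch-set formulation): there is a family of nonempty, pairwise disjoint,
connected subsets of the vertices of `G`, indexed by the vertices of `H`, such that whenever
two vertices are adjacent in `H` there is an edge of `G` between the corresponding sets. -/
def IsMinor {W V : Type} (H : SimpleGraph W) (G : SimpleGraph V) : Prop :=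
  ∃ B : W → Set V,
    (∀ w, (B w).Nonempty) ∧
    (∀ w, (G.induce (B w)).Connected) ∧
    (∀ w₁ w₂, w₁ ≠ w₂ → Disjoint (B w₁) (B w₂)) ∧
    (∀ w₁ w₂, H.Adj w₁ w₂ → ∃ u ∈ B w₁, ∃ x ∈ B w₂, G.Adj u x)

/-- The complete bipartite graph `K₃,₃`. -/
def K33 : SimpleGraph (Fin 3 ⊕ Fin 3) := completeBipartiteGraph (Fin 3) (Fin 3)

/-- The graph obtained from `G` by subdividing the edge `uw` once: the edge `uw` is
deleted, and a new vertex `x` is added together with the edges `ux` and `xw`. -/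
def subdivide {V : Type} (G : SimpleGraph V) (u w : V) : SimpleGraph (V ⊕ Unit) :=
  SimpleGraph.fromEdgeSet
    ((Sym2.map Sum.inl '' (G.edgeSet \ {s(u, w)})) ∪
      {s(Sum.inl u, Sum.inr ()), s(Sum.inr (), Sum.inl w)})

/-- The vertices of the graph `Γ₈`. -/
inductive V8 : Type
  | v1 | v2 | a1 | a2 | a3 | b1 | b2 | b3
  deriving DecidableEq

open V8

/-- The graph `Γ₈`: the hexagonal cycle `a₁a₂a₃b₁b₂b₃a₁`, the chord `a₃b₃`,
and the four edges `a₁v₁`, `v₁b₁`, `a₂v₂`, `v₂b₂`. -/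
def Gamma8 : SimpleGraph V8 :=
  SimpleGraph.fromEdgeSet
    {s(a1, a2), s(a2, a3), s(a3, b1), s(b1, b2), s(b2, b3), s(b3, a1),
     s(a3, b3),
     s(a1, v1), s(v1, b1), s(a2, v2), s(v2, b2)}

/-- The vertices of the graph obtained from `Γ₈` by contracting the edges `a₁v₁` and
`a₂v₂` (the vertex `v₁` is identified with `a₁`, and `v₂` with `a₂`). -/
inductive V6 : Type
  | A1 | A2 | A3 | B1 | B2 | B3
  deriving DecidableEq

/-- The map identifying `v₁` with `a₁` and `v₂` with `a₂`. -/
def q8 : V8 → V6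
  | v1 => V6.A1
  | v2 => V6.A2
  | a1 => V6.A1
  | a2 => V6.A2
  | a3 => V6.A3
  | b1 => V6.B1
  | b2 => V6.B2
  | b3 => V6.B3

/-- The graph obtained from `Γ₈` by contracting the edges `a₁v₁` and `a₂v₂` (identifying
`v₁` with `a₁` and `v₂` with `a₂`, and deleting any resulting loops and parallel edges). -/
def Gamma8contr : SimpleGraph V6 :=
  SimpleGraph.fromRel (fun x y => ∃ u u' : V8, q8 u = x ∧ q8 u' = y ∧ Gamma8.Adj u u')

/-! With sides `{a₁, a₃, b₂}` and `{a₂, b₁, b₃}`, the seven edges of `Γ₈` among these six vertices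
are seven of the nine edges of `K₃,₃`; the remaining two, `a₁b₁` and `b₂a₂`, are vertex-disjoint and
occur in `Γ₈` subdivided by `v₁` and `v₂`. Contracting `a₁v₁` and `a₂v₂` therefore gives back `K₃,₃`,
and the fibres of the contraction, being cliques, are the branch sets of a `K₃,₃` minor. -/

namespace SimpleGraph

variable {V W : Type}

theorem IsClique.induce_connected {G : SimpleGraph V} {s : Set V} (h : G.IsClique s)
    (hs : s.Nonempty) : (G.induce s).Connected := by
  have : Nonempty s := hs.to_subtype
  rw [induce_eq_top.2 h]
  exact connected_top

noncomputable def Iso.ofBijective {G : SimpleGraph V} {H : SimpleGraph W} (f : V → W)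
    (hf : Function.Bijective f) (hadj : ∀ a b, H.Adj (f a) (f b) ↔ G.Adj a b) : G ≃g H :=
  ⟨Equiv.ofBijective f hf, hadj _ _⟩

end SimpleGraph

section Minor

variable {V W W' : Type} {G : SimpleGraph V}

theorem IsMinor.of_iso {H : SimpleGraph W} {H' : SimpleGraph W'} (hH : IsMinor H G)
    (e : H ≃g H') : IsMinor H' G := by
  obtain ⟨B, hne, hconn, hdisj, hadj⟩ := hH
  refine ⟨B ∘ e.symm, fun w => hne _, fun w => hconn _, fun w₁ w₂ h => hdisj _ _ ?_,
    fun w₁ w₂ h => hadj _ _ (e.symm.map_adj_iff.2 h)⟩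
  exact e.symm.injective.ne h

theorem isMinor_fromRel_of_connected_fibres (q : V → W)
    (hq : ∀ w, (G.induce (q ⁻¹' {w})).Connected) :
    IsMinor (SimpleGraph.fromRel fun x y => ∃ u u', q u = x ∧ q u' = y ∧ G.Adj u u') G := by
  refine ⟨fun w => q ⁻¹' {w}, fun w => ?_, hq, fun w₁ w₂ h => ?_, fun w₁ w₂ h => ?_⟩
  · exact Set.nonempty_coe_sort.1 (hq w).nonempty
  · exact (Set.disjoint_singleton.2 h).preimage q
  · obtain ⟨-, ⟨u, u', rfl, rfl, huu'⟩ | ⟨u', u, rfl, rfl, huu'⟩⟩ :=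
      (SimpleGraph.fromRel_adj _ _ _).1 h
    · exact ⟨u, rfl, u', rfl, huu'⟩
    · exact ⟨u, rfl, u', rfl, huu'.symm⟩

end Minor

section Subdivide

open Sum

variable {V : Type} (G : SimpleGraph V) (u w : V)

@[simp]
theorem subdivide_adj_inl_inl {a b : V} :
    (subdivide G u w).Adj (inl a) (inl b) ↔ G.Adj a b ∧ s(a, b) ≠ s(u, w) := by
  rw [subdivide, SimpleGraph.fromEdgeSet_adj, ← Sym2.map_mk, Set.mem_union,
    (Sym2.map.injective inl_injective).mem_set_image]
  simp only [Set.mem_sdiff, SimpleGraph.mem_edgeSet, Set.mem_insert_iff, Set.mem_singleton_iff,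
    Sym2.map_mk, Sym2.eq_iff, reduceCtorEq, and_false, false_and, or_false, ne_eq, inl.injEq]
  exact ⟨fun h => h.1, fun h => ⟨h, h.1.ne⟩⟩

@[simp]
theorem subdivide_adj_inl_inr {a : V} (x : Unit) :
    (subdivide G u w).Adj (inl a) (inr x) ↔ a = u ∨ a = w := by
  rw [subdivide, SimpleGraph.fromEdgeSet_adj]
  simp only [Set.mem_union, Set.mem_image, Set.mem_insert_iff, Set.mem_singleton_iff,
    Sym2.eq_iff, inl.injEq, reduceCtorEq, and_true, and_false, or_false, false_or, ne_eq,
    not_false_eq_true]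
  refine or_iff_right_of_imp ?_
  rintro ⟨⟨c, d⟩, -, hz⟩
  simp [Sym2.map_mk] at hz

@[simp]
theorem subdivide_adj_inr_inr (x y : Unit) : ¬ (subdivide G u w).Adj (inr x) (inr y) := by
  simp [subdivide]

instance [DecidableEq V] [DecidableRel G.Adj] : DecidableRel (subdivide G u w).Adj
  | inl _, inl _ => decidable_of_iff' _ (subdivide_adj_inl_inl G u w)
  | inl _, inr x => decidable_of_iff' _ (subdivide_adj_inl_inr G u w x)
  | inr x, inl _ =>
    decidable_of_iff' _ (((subdivide G u w).adj_comm _ _).trans (subdivide_adj_inl_inr G u w x))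
  | inr x, inr y => isFalse (subdivide_adj_inr_inr G u w x y)

end Subdivide

instance : Fintype V8 := ⟨{v1, v2, a1, a2, a3, b1, b2, b3}, fun x => by cases x <;> decide⟩

instance : Fintype V6 :=
  ⟨{V6.A1, V6.A2, V6.A3, V6.B1, V6.B2, V6.B3}, fun x => by cases x <;> decide⟩

instance : DecidableRel Gamma8.Adj := by unfold Gamma8; infer_instance

instance : DecidableRel K33.Adj := fun x y =>
  inferInstanceAs (Decidable (x.isLeft ∧ y.isRight ∨ x.isRight ∧ y.isLeft))

instance : DecidableRel Gamma8contr.Adj := fun x y =>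
  decidable_of_iff' _ (SimpleGraph.fromRel_adj _ x y)

open Sum in
def subdivisionToGamma8 : ((Fin 3 ⊕ Fin 3) ⊕ Unit) ⊕ Unit → V8
  | inl (inl (inl 0)) => a1
  | inl (inl (inl 1)) => a3
  | inl (inl (inl 2)) => b2
  | inl (inl (inr 0)) => a2
  | inl (inl (inr 1)) => b1
  | inl (inl (inr 2)) => b3
  | inl (inr ()) => v1
  | inr () => v2

noncomputable def subdivisionIsoGamma8 :
    subdivide (subdivide K33 (.inl 0) (.inr 1)) (.inl (.inl 2)) (.inl (.inr 0)) ≃g Gamma8 :=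
  .ofBijective subdivisionToGamma8 (by decide) (by decide)

def V6.toK33 : V6 → Fin 3 ⊕ Fin 3
  | .A1 => .inl 0
  | .A3 => .inl 1
  | .B2 => .inl 2
  | .A2 => .inr 0
  | .B1 => .inr 1
  | .B3 => .inr 2

noncomputable def Gamma8contrIsoK33 : Gamma8contr ≃g K33 :=
  .ofBijective V6.toK33 (by decide) (by decide)

theorem Gamma8_induce_q8_fibre_connected (x : V6) :
    (Gamma8.induce (q8 ⁻¹' {x})).Connected := by
  have hclique : ∀ u v, q8 u = q8 v → u ≠ v → Gamma8.Adj u v := by decide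
  have hsurj : Function.Surjective q8 := by decide
  obtain ⟨u, rfl⟩ := hsurj x
  exact SimpleGraph.IsClique.induce_connected
    (fun v hv v' hv' => hclique v v' (hv.trans hv'.symm)) ⟨u, rfl⟩

/-- `Γ₈` is isomorphic to the graph obtained from `K₃,₃` by subdividing once each of two
non-adjacent (vertex-disjoint) edges; in particular, contracting the edges `a₁v₁` and
`a₂v₂` of `Γ₈` yields a graph isomorphic to `K₃,₃`, so `K₃,₃` is a minor of `Γ₈`. -/
theorem Gamma8_is_double_subdivision_of_K33 :
    (∃ u w u' w' : Fin 3 ⊕ Fin 3, K33.Adj u w ∧ K33.Adj u' w' ∧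
      u ≠ u' ∧ u ≠ w' ∧ w ≠ u' ∧ w ≠ w' ∧
      Nonempty ((subdivide (subdivide K33 u w) (Sum.inl u') (Sum.inl w')) ≃g Gamma8)) ∧
    Nonempty (Gamma8contr ≃g K33) ∧
    IsMinor K33 Gamma8 := by
  refine ⟨⟨.inl 0, .inr 1, .inl 2, .inr 0, by decide, by decide, by decide, by decide, by decide,
    by decide, ⟨subdivisionIsoGamma8⟩⟩, ⟨Gamma8contrIsoK33⟩, ?_⟩
  exact (isMinor_fromRel_of_connected_fibres q8 Gamma8_induce_q8_fibre_connected).of_iso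
    Gamma8contrIsoK33
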